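/- arXiv:1508.05546 — 2 statements merged into one kernel-verified Lean document; each statement's English description precedes it below -/
import Mathlib

section
/- Let K be an algebraically closed field of characteristic zero and fix integers d ≥ 1 and s ≥ 1. Suppose that for some n_0 ≥ 1 one has s(dn_0+1) ≤ C(n_0+d,d) and there exist d-tuples f_1,…,f_s of linear forms in K[x_0,…,x_{n_0}] with dim_K Σ_{i=1}^s Σ_{j=1}^d π_j(f_i)·R_1 = s(dn_0+1). Then for every n ≥ n_0 there exist d-tuples g_1,…,g_s of linear forms in K[x_0,…,x_n] with dim_K Σ_{i=1}^s Σ_{j=1}^d π_j(g_i)·R_1 = min{s(dn+1), C(n+d,d)} (i.e., σ_s(Split_d(P^n)) is nondefective for all n ≥ n_0). -/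
/-!
Write `V(f) = Σᵢ Σⱼ πⱼ(fᵢ)·R₁`. Within one block all the summands `πⱼ(fᵢ)·R₁` (each of
dimension `≤ n + 1`) contain the common form `∏ₘ fᵢₘ = πⱼ(fᵢ) fᵢⱼ`, so a block has dimension
`≤ dn + 1` and `dim V(f) ≤ s(dn + 1)`. If the `πⱼ(fᵢ)` were linearly dependent, one summand would
be redundant and the same count gives `dim V(f) ≤ s(dn + 1) - n`; hence when `V(f)` has the expected
dimension `s(dn + 1)` and `n ≥ 1`, the `sd` forms `πⱼ(fᵢ)` are independent.

Now view the same linear forms in one more variable `x_{n+1}`. The new space contains `V(f)` and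
the `sd` independent forms `πⱼ(fᵢ) x_{n+1}`, whose span meets `V(f)` only in `0`, so it has the
maximal dimension `s(dn + 1) + sd = s(d(n + 1) + 1)`. Induction on `n` concludes, together with the
elementary fact that `s(dn + 1) ≤ C(n + d, d)` propagates from `n` to `n + 1`.
-/

open MvPolynomial Module

section LinearAlgebra

variable {K V W : Type*} [Field K] [AddCommGroup V] [Module K V] [AddCommGroup W] [Module K W]

theorem Submodule.finrank_sup_map_add_one_le (φ : V →ₗ[K] W) {U : Submodule K V}
    {D : Submodule K W} [FiniteDimensional K U] [FiniteDimensional K D] {v : V} (hv : v ∈ U)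
    (hφv : φ v ≠ 0) (hD : φ v ∈ D) :
    finrank K ↥(D ⊔ U.map φ) + 1 ≤ finrank K D + finrank K U := by
  have hinf : 1 ≤ finrank K ↥(D ⊓ U.map φ) := by
    rw [Submodule.one_le_finrank_iff, Submodule.ne_bot_iff]
    exact ⟨φ v, ⟨hD, v, hv, rfl⟩, hφv⟩
  have := Submodule.finrank_sup_add_finrank_inf_eq D (U.map φ)
  have := Submodule.finrank_map_le φ U
  omega

theorem Submodule.finrank_iSup_le_sum {ι : Type*} [Fintype ι] (N : ι → Submodule K V)
    [∀ i, FiniteDimensional K (N i)] :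
    finrank K ↥(⨆ i, N i) ≤ ∑ i, finrank K (N i) := by
  classical
  suffices ∀ T : Finset ι, finrank K ↥(⨆ i ∈ T, N i) ≤ ∑ i ∈ T, finrank K (N i) by
    have huniv : ⨆ i ∈ Finset.univ, N i = ⨆ i, N i := by simp
    rw [← huniv]
    exact this Finset.univ
  intro T
  induction T using Finset.induction_on with
  | empty => simp [Finset.notMem_empty]
  | insert i T hi ih =>
    rw [Finset.iSup_insert, Finset.sum_insert hi]
    exact (Submodule.finrank_add_le_finrank_add_finrank _ _).trans (by gcongr)

end LinearAlgebra

theorem Nat.mul_le_choose_add_one_of_mul_le_choose {s d n : ℕ}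
    (h : s * (d * n + 1) ≤ (n + d).choose d) :
    s * (d * (n + 1) + 1) ≤ (n + 1 + d).choose d := by
  obtain _ | e := d
  · simpa using h
  have hratio : (n + (e + 1)).choose (e + 1) * (e + 1) = (n + (e + 1)).choose e * (n + 1) := by
    rw [Nat.choose_succ_right_eq]
    congr 1
    omega
  have hnew : s * (e + 1) ≤ (n + (e + 1)).choose e := by
    refine Nat.le_of_mul_le_mul_right ?_ (Nat.succ_pos n)
    calc s * (e + 1) * (n + 1) ≤ s * ((e + 1) * n + 1) * (e + 1) := by
          rw [mul_right_comm]; gcongr; nlinarith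
      _ ≤ (n + (e + 1)).choose (e + 1) * (e + 1) := by gcongr
      _ = (n + (e + 1)).choose e * (n + 1) := hratio
  calc s * ((e + 1) * (n + 1) + 1) = s * ((e + 1) * n + 1) + s * (e + 1) := by ring
    _ ≤ (n + (e + 1)).choose (e + 1) + (n + (e + 1)).choose e := add_le_add h hnew
    _ = (n + 1 + (e + 1)).choose (e + 1) := by
      rw [show n + 1 + (e + 1) = n + (e + 1) + 1 by omega, Nat.choose_succ_succ, add_comm]

noncomputable section

variable {K : Type*} [Field K]

instance MvPolynomial.finiteDimensional_homogeneousSubmodule {σ : Type*} [Finite σ] (n : ℕ) :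
    FiniteDimensional K (homogeneousSubmodule σ K n) :=
  Module.Finite.iff_fg.2 (homogeneousSubmodule_fg σ K n)

theorem MvPolynomial.finrank_homogeneousSubmodule_one (σ : Type*) [Fintype σ] :
    finrank K (homogeneousSubmodule σ K 1) = Fintype.card σ := by
  rw [homogeneousSubmodule_one_eq_span_X, finrank_span_eq_card (linearIndependent_X σ K)]

-- `prodExcept f j` is the paper's `π_j(f)` and `linearMultiples g` is `g · R₁`.
def prodExcept {κ R : Type*} [DecidableEq κ] [Fintype κ] [CommMonoid R] (f : κ → R) (j : κ) : R :=
  ∏ m ∈ Finset.univ.erase j, f m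

def linearMultiples {σ : Type*} (g : MvPolynomial σ K) : Submodule K (MvPolynomial σ K) :=
  (homogeneousSubmodule σ K 1).map (LinearMap.mulLeft K g)

def blockSpan {σ κ : Type*} [DecidableEq κ] [Fintype κ] (f : κ → MvPolynomial σ K)
    (S : Finset κ) : Submodule K (MvPolynomial σ K) :=
  ⨆ j ∈ S, linearMultiples (prodExcept f j)

def terraciniSpace {σ ι κ : Type*} [DecidableEq κ] [Fintype κ] (F : ι → κ → MvPolynomial σ K) :
    Submodule K (MvPolynomial σ K) :=
  ⨆ i, ⨆ j, linearMultiples (prodExcept (F i) j)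

section Basic

variable {σ : Type*}

instance [Finite σ] (g : MvPolynomial σ K) : FiniteDimensional K (linearMultiples g) := by
  unfold linearMultiples; infer_instance

theorem mul_mem_linearMultiples (g : MvPolynomial σ K) {ℓ : MvPolynomial σ K}
    (hℓ : ℓ.IsHomogeneous 1) : g * ℓ ∈ linearMultiples g :=
  ⟨ℓ, hℓ, rfl⟩

theorem linearMultiples_zero : linearMultiples (0 : MvPolynomial σ K) = ⊥ := by
  simp [linearMultiples, LinearMap.mulLeft_zero_eq_zero]

theorem finrank_linearMultiples_le {n : ℕ} (g : MvPolynomial (Fin (n + 1)) K) :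
    finrank K (linearMultiples g) ≤ n + 1 := by
  refine (Submodule.finrank_map_le (LinearMap.mulLeft K g) _).trans ?_
  rw [finrank_homogeneousSubmodule_one, Fintype.card_fin]

variable {κ : Type*} [DecidableEq κ] [Fintype κ]

theorem prodExcept_mul_self {R : Type*} [CommMonoid R] (f : κ → R) (j : κ) :
    prodExcept f j * f j = ∏ m, f m :=
  Finset.prod_erase_mul _ _ (Finset.mem_univ j)

theorem prodExcept_eq_zero {R : Type*} [CommMonoidWithZero R] {f : κ → R} {j m : κ}
    (hm : f m = 0) (hmj : m ≠ j) : prodExcept f j = 0 :=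
  Finset.prod_eq_zero (Finset.mem_erase.2 ⟨hmj, Finset.mem_univ m⟩) hm

instance [Finite σ] (f : κ → MvPolynomial σ K) (S : Finset κ) :
    FiniteDimensional K (blockSpan f S) := by
  unfold blockSpan; infer_instance

instance {ι : Type*} [Finite ι] [Finite σ] (F : ι → κ → MvPolynomial σ K) :
    FiniteDimensional K (terraciniSpace F) := by
  unfold terraciniSpace; infer_instance

theorem linearMultiples_le_blockSpan (f : κ → MvPolynomial σ K) {S : Finset κ} {j : κ}
    (hj : j ∈ S) : linearMultiples (prodExcept f j) ≤ blockSpan f S :=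
  le_iSup₂_of_le j hj le_rfl

end Basic

section Block

variable {κ : Type*} [DecidableEq κ] [Fintype κ] {n : ℕ} {f : κ → MvPolynomial (Fin (n + 1)) K}

-- Every `π_j(f)·R₁` contains `∏ f = π_j(f) f_j`, so each new summand adds at most `n` dimensions.
theorem finrank_span_prod_sup_blockSpan_le (hf : ∀ j, (f j).IsHomogeneous 1)
    (hf0 : ∀ j, f j ≠ 0) (S : Finset κ) :
    finrank K ↥(K ∙ (∏ m, f m) ⊔ blockSpan f S) ≤ S.card * n + 1 := by
  induction S using Finset.induction_on with
  | empty =>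
    have hempty : blockSpan f ∅ = ⊥ := by simp [blockSpan]
    rw [hempty, sup_bot_eq]
    simpa using finrank_span_le_card (R := K) ({∏ m, f m} : Set _)
  | insert j S hj ih =>
    have hP : prodExcept f j * f j ≠ 0 := by
      rw [prodExcept_mul_self]
      exact Finset.prod_ne_zero_iff.2 fun m _ => hf0 m
    have key := Submodule.finrank_sup_map_add_one_le (LinearMap.mulLeft K (prodExcept f j))
      (U := homogeneousSubmodule (Fin (n + 1)) K 1) (D := K ∙ (∏ m, f m) ⊔ blockSpan f S)
      (hf j) hP (by
        rw [LinearMap.mulLeft_apply, prodExcept_mul_self]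
        exact Submodule.mem_sup_left (Submodule.mem_span_singleton_self _))
    have hsplit : K ∙ (∏ m, f m) ⊔ blockSpan f (insert j S) = K ∙ (∏ m, f m) ⊔ blockSpan f S ⊔
        (homogeneousSubmodule (Fin (n + 1)) K 1).map (LinearMap.mulLeft K (prodExcept f j)) := by
      rw [blockSpan, Finset.iSup_insert, sup_left_comm, sup_comm]
      rfl
    rw [finrank_homogeneousSubmodule_one, Fintype.card_fin] at key
    rw [hsplit, Finset.card_insert_of_notMem hj]
    linarith

theorem blockSpan_le_of_eq_zero {m : κ} (hm : f m = 0) (S : Finset κ) :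
    blockSpan f S ≤ ⨆ (_ : m ∈ S), linearMultiples (prodExcept f m) := by
  refine iSup₂_le fun j hj => ?_
  obtain rfl | hmj := eq_or_ne m j
  · exact le_iSup_of_le hj le_rfl
  · simp [prodExcept_eq_zero hm hmj, linearMultiples_zero]

theorem finrank_blockSpan_le (hf : ∀ j, (f j).IsHomogeneous 1) (S : Finset κ) :
    finrank K (blockSpan f S) ≤ S.card * n + 1 := by
  by_cases hf0 : ∀ j, f j ≠ 0
  · exact (Submodule.finrank_mono le_sup_right).trans
      (finrank_span_prod_sup_blockSpan_le hf hf0 S)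
  push Not at hf0
  obtain ⟨m, hm⟩ := hf0
  refine (Submodule.finrank_mono (blockSpan_le_of_eq_zero hm S)).trans ?_
  by_cases hmS : m ∈ S
  · have := Finset.card_pos.2 ⟨m, hmS⟩
    have := finrank_linearMultiples_le (prodExcept f m)
    rw [iSup_pos hmS]
    nlinarith
  · rw [iSup_neg hmS, finrank_bot]
    exact Nat.zero_le _

end Block

section Independence

variable {ι κ : Type*} [DecidableEq κ] [Fintype κ] {n : ℕ}
  {F : ι → κ → MvPolynomial (Fin (n + 1)) K}

theorem terraciniSpace_le_of_mem_span [DecidableEq ι] (p₀ : ι × κ)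
    (h : prodExcept (F p₀.1) p₀.2 ∈
      Submodule.span K ((fun p : ι × κ => prodExcept (F p.1) p.2) '' (Set.univ \ {p₀}))) :
    terraciniSpace F ≤ ⨆ i, blockSpan (F i) (Finset.univ.filter fun j => (i, j) ≠ p₀) := by
  set T := ⨆ i, blockSpan (F i) (Finset.univ.filter fun j => (i, j) ≠ p₀)
  have hle : ∀ i j, (i, j) ≠ p₀ → linearMultiples (prodExcept (F i) j) ≤ T := fun i j hij =>
    le_iSup_of_le i (linearMultiples_le_blockSpan _ (by simpa using hij))
  refine iSup₂_le fun i j => ?_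
  by_cases hij : (i, j) = p₀
  · subst hij
    rintro _ ⟨ℓ, hℓ, rfl⟩
    -- the relation expressing `π_{p₀}` through the other `π_p` persists after multiplying by `ℓ`
    have hspan : Submodule.span K
        ((fun p : ι × κ => prodExcept (F p.1) p.2) '' (Set.univ \ {(i, j)})) ≤
          T.comap (LinearMap.mulRight K ℓ) := by
      rw [Submodule.span_le]
      rintro _ ⟨p, hp, rfl⟩
      exact hle p.1 p.2 (by simpa using hp) (mul_mem_linearMultiples _ hℓ)
    exact hspan h
  · exact hle i j hij

variable [Fintype ι]

theorem sum_card_filter_ne_add_one [DecidableEq ι] (p₀ : ι × κ) :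
    ∑ i, (Finset.univ.filter fun j => (i, j) ≠ p₀).card + 1 =
      Fintype.card ι * Fintype.card κ := by
  have h : ∑ i, (Finset.univ.filter fun j => (i, j) ≠ p₀).card =
      (Finset.univ.erase p₀).card := by
    rw [← Finset.filter_ne' Finset.univ p₀, Finset.card_filter, Fintype.sum_prod_type]
    simp [Finset.card_filter]
  rw [h, Finset.card_erase_add_one (Finset.mem_univ _), Finset.card_univ, Fintype.card_prod]

theorem finrank_iSup_blockSpan_le (hF : ∀ i j, (F i j).IsHomogeneous 1) (S : ι → Finset κ) :
    finrank K ↥(⨆ i, blockSpan (F i) (S i)) ≤ (∑ i, (S i).card) * n + Fintype.card ι := by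
  refine (Submodule.finrank_iSup_le_sum _).trans ?_
  refine (Finset.sum_le_sum fun i _ => finrank_blockSpan_le (hF i) (S i)).trans ?_
  simp [Finset.sum_add_distrib, Finset.sum_mul]

theorem finrank_terraciniSpace_le (hF : ∀ i j, (F i j).IsHomogeneous 1) :
    finrank K (terraciniSpace F) ≤ Fintype.card ι * (Fintype.card κ * n + 1) := by
  have h : terraciniSpace F = ⨆ i, blockSpan (F i) Finset.univ := by
    simp [terraciniSpace, blockSpan]
  rw [h]
  refine (finrank_iSup_blockSpan_le hF _).trans (le_of_eq ?_)
  simp only [Finset.card_univ, Finset.sum_const, smul_eq_mul]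
  ring

theorem finrank_terraciniSpace_lt_of_not_linearIndependent (hn : 1 ≤ n)
    (hF : ∀ i j, (F i j).IsHomogeneous 1)
    (hdep : ¬LinearIndependent K fun p : ι × κ => prodExcept (F p.1) p.2) :
    finrank K (terraciniSpace F) < Fintype.card ι * (Fintype.card κ * n + 1) := by
  classical
  obtain ⟨p₀, hp₀⟩ : ∃ p₀ : ι × κ, prodExcept (F p₀.1) p₀.2 ∈
      Submodule.span K ((fun p : ι × κ => prodExcept (F p.1) p.2) '' (Set.univ \ {p₀})) := by
    simpa [linearIndependent_iff_notMem_span] using hdep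
  have hle := (Submodule.finrank_mono (terraciniSpace_le_of_mem_span p₀ hp₀)).trans
    (finrank_iSup_blockSpan_le hF _)
  have hcount := sum_card_filter_ne_add_one p₀
  nlinarith

theorem linearIndependent_prodExcept_of_finrank_eq (hn : 1 ≤ n)
    (hF : ∀ i j, (F i j).IsHomogeneous 1)
    (h : finrank K (terraciniSpace F) = Fintype.card ι * (Fintype.card κ * n + 1)) :
    LinearIndependent K fun p : ι × κ => prodExcept (F p.1) p.2 :=
  by_contra fun hdep => (finrank_terraciniSpace_lt_of_not_linearIndependent hn hF hdep).ne h

end Independence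

section Extension

theorem rename_prodExcept {σ τ κ : Type*} [DecidableEq κ] [Fintype κ] (e : σ → τ)
    (f : κ → MvPolynomial σ K) (j : κ) :
    rename e (prodExcept f j) = prodExcept (fun m => rename e (f m)) j :=
  map_prod _ _ _

theorem map_rename_linearMultiples_le {σ τ : Type*} (e : σ → τ) (g : MvPolynomial σ K) :
    (linearMultiples g).map (rename e).toLinearMap ≤ linearMultiples (rename e g) := by
  rintro _ ⟨_, ⟨ℓ, hℓ, rfl⟩, rfl⟩
  simpa using mul_mem_linearMultiples (rename e g) (hℓ.rename_isHomogeneous (f := e))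

theorem disjoint_range_rename_castSucc_range_mul_X_last (n : ℕ) :
    Disjoint (LinearMap.range (rename Fin.castSucc : MvPolynomial (Fin n) K →ₐ[K] _).toLinearMap)
      (LinearMap.range (LinearMap.mulRight K (X (Fin.last n) : MvPolynomial (Fin (n + 1)) K))) := by
  rw [Submodule.disjoint_def]
  rintro _ ⟨a, rfl⟩ ⟨b, hb⟩
  -- setting the last variable to zero retracts `rename Fin.castSucc` and kills multiples of it
  set ψ := aeval (R := K) (Fin.snoc (α := fun _ => MvPolynomial (Fin n) K) X 0)
  have ha : ψ (rename Fin.castSucc a) = a := by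
    rw [aeval_rename, Fin.snoc_comp_castSucc, aeval_X_left_apply]
  have hb0 : ψ (b * X (Fin.last n)) = 0 := by simp [ψ]
  simp only [LinearMap.mulRight_apply, AlgHom.toLinearMap_apply] at hb ⊢
  rw [← ha, ← hb, hb0, map_zero]

variable {ι κ : Type*} [DecidableEq κ] [Fintype κ]

theorem map_rename_terraciniSpace_le {σ τ : Type*} (e : σ → τ) (F : ι → κ → MvPolynomial σ K) :
    (terraciniSpace F).map (rename e).toLinearMap ≤
      terraciniSpace fun i j => rename e (F i j) := by
  simp only [terraciniSpace, Submodule.map_iSup]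
  refine iSup_mono fun i => iSup_mono fun j => ?_
  rw [← rename_prodExcept]
  exact map_rename_linearMultiples_le e _

theorem span_prodExcept_mul_X_le_terraciniSpace {σ : Type*} (F : ι → κ → MvPolynomial σ K)
    (a : σ) :
    Submodule.span K (Set.range fun p : ι × κ => prodExcept (F p.1) p.2 * X a) ≤
      terraciniSpace F := by
  rw [Submodule.span_le]
  rintro _ ⟨p, rfl⟩
  exact Submodule.mem_iSup_of_mem p.1 <| Submodule.mem_iSup_of_mem p.2 <|
    mul_mem_linearMultiples _ (isHomogeneous_X K a)

theorem finrank_terraciniSpace_add_le_rename_castSucc [Fintype ι] {m : ℕ}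
    (F : ι → κ → MvPolynomial (Fin m) K)
    (hind : LinearIndependent K fun p : ι × κ => prodExcept (F p.1) p.2) :
    finrank K (terraciniSpace F) + Fintype.card ι * Fintype.card κ ≤
      finrank K (terraciniSpace fun i j => rename Fin.castSucc (F i j)) := by
  let ρ := (rename Fin.castSucc :
    MvPolynomial (Fin m) K →ₐ[K] MvPolynomial (Fin (m + 1)) K).toLinearMap
  let μ := LinearMap.mulRight K (X (Fin.last m) : MvPolynomial (Fin (m + 1)) K)
  have hρ : Function.Injective ρ := rename_injective _ (Fin.castSucc_injective _)
  have hv : (fun p : ι × κ =>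
      prodExcept (fun l => rename Fin.castSucc (F p.1 l)) p.2 * X (Fin.last m)) =
      (μ ∘ₗ ρ) ∘ fun p : ι × κ => prodExcept (F p.1) p.2 := by
    funext p
    simp [μ, ρ, rename_prodExcept]
  let A := (terraciniSpace F).map ρ
  let B := Submodule.span K (Set.range ((μ ∘ₗ ρ) ∘ fun p : ι × κ => prodExcept (F p.1) p.2))
  have : FiniteDimensional K B := FiniteDimensional.span_of_finite K (Set.finite_range _)
  have hA : finrank K A = finrank K (terraciniSpace F) :=
    (Submodule.equivMapOfInjective ρ hρ _).finrank_eq.symm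
  have hB : finrank K B = Fintype.card ι * Fintype.card κ := by
    rw [finrank_span_eq_card (hind.map' _ (LinearMap.ker_eq_bot.2
      ((mul_left_injective₀ (X_ne_zero _)).comp hρ))), Fintype.card_prod]
  have hAB : A ⊓ B = ⊥ := by
    refine disjoint_iff.1 ((disjoint_range_rename_castSucc_range_mul_X_last m).mono
      LinearMap.map_le_range ?_)
    rw [Submodule.span_le]
    rintro _ ⟨p, rfl⟩
    exact ⟨_, rfl⟩
  have hsup : A ⊔ B ≤ terraciniSpace fun i j => rename Fin.castSucc (F i j) := by
    refine sup_le (map_rename_terraciniSpace_le _ F) ?_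
    have := span_prodExcept_mul_X_le_terraciniSpace
      (fun i j => rename Fin.castSucc (F i j)) (Fin.last m)
    rwa [hv] at this
  have hdim := Submodule.finrank_sup_add_finrank_inf_eq A B
  rw [hAB, finrank_bot, hA, hB, add_zero] at hdim
  exact hdim ▸ Submodule.finrank_mono hsup

theorem exists_homogeneous_finrank_terraciniSpace_eq [Fintype ι] {n₀ : ℕ} (hn₀ : 1 ≤ n₀)
    (F₀ : ι → κ → MvPolynomial (Fin (n₀ + 1)) K) (hF₀ : ∀ i j, (F₀ i j).IsHomogeneous 1)
    (h₀ : finrank K (terraciniSpace F₀) = Fintype.card ι * (Fintype.card κ * n₀ + 1))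
    {n : ℕ} (hn : n₀ ≤ n) :
    ∃ F : ι → κ → MvPolynomial (Fin (n + 1)) K, (∀ i j, (F i j).IsHomogeneous 1) ∧
      finrank K (terraciniSpace F) = Fintype.card ι * (Fintype.card κ * n + 1) := by
  induction n, hn using Nat.le_induction with
  | base => exact ⟨F₀, hF₀, h₀⟩
  | succ n hn ih =>
    obtain ⟨F, hF, hrank⟩ := ih
    have hF' : ∀ i j, (rename Fin.castSucc (F i j)).IsHomogeneous 1 :=
      fun i j => (hF i j).rename_isHomogeneous
    refine ⟨fun i j => rename Fin.castSucc (F i j), hF',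
      le_antisymm (finrank_terraciniSpace_le hF') ?_⟩
    have hind := linearIndependent_prodExcept_of_finrank_eq (hn₀.trans hn) hF hrank
    have hgrow := finrank_terraciniSpace_add_le_rename_castSucc F hind
    rw [hrank] at hgrow
    linarith

end Extension

end

theorem stmt8_general (K : Type*) [Field K]
    (d s n₀ : ℕ) (hn₀ : 1 ≤ n₀)
    (hsub : s * (d * n₀ + 1) ≤ (n₀ + d).choose d)
    (hex : ∃ f : Fin s → Fin d → MvPolynomial (Fin (n₀ + 1)) K,
      (∀ i j, (f i j).IsHomogeneous 1) ∧
      Module.finrank K ↥(⨆ i : Fin s, ⨆ j : Fin d,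
          Submodule.map (LinearMap.mulLeft K (∏ m ∈ Finset.univ.erase j, f i m))
            (homogeneousSubmodule (Fin (n₀ + 1)) K 1))
        = s * (d * n₀ + 1)) :
    ∀ n : ℕ, n₀ ≤ n →
      ∃ g : Fin s → Fin d → MvPolynomial (Fin (n + 1)) K,
        (∀ i j, (g i j).IsHomogeneous 1) ∧
        Module.finrank K ↥(⨆ i : Fin s, ⨆ j : Fin d,
            Submodule.map (LinearMap.mulLeft K (∏ m ∈ Finset.univ.erase j, g i m))
              (homogeneousSubmodule (Fin (n + 1)) K 1))
          = min (s * (d * n + 1)) ((n + d).choose d) := by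
  intro n hn
  obtain ⟨f, hf, hrank⟩ := hex
  obtain ⟨g, hg, hgrank⟩ := exists_homogeneous_finrank_terraciniSpace_eq hn₀ f hf
    (by rw [Fintype.card_fin, Fintype.card_fin]; exact hrank) hn
  have hbound : s * (d * n + 1) ≤ (n + d).choose d :=
    Nat.le_induction hsub (fun _ _ => Nat.mul_le_choose_add_one_of_mul_le_choose) n hn
  refine ⟨g, hg, ?_⟩
  rw [Fintype.card_fin, Fintype.card_fin] at hgrank
  rw [min_eq_left hbound]
  exact hgrank

/-- Theorem 1.3 of the paper: If `s(dn_0+1) ≤ C(n_0+d,d)` and there exist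
`d`-tuples `f_1,…,f_s` of linear forms in `K[x_0,…,x_{n_0}]` with
`dim Σ_i Σ_j π_j(f_i)·R_1 = s(dn_0+1)`, then for every `n ≥ n_0` there exist `d`-tuples
`g_1,…,g_s` of linear forms in `K[x_0,…,x_n]` with
`dim Σ_i Σ_j π_j(g_i)·R_1 = min{s(dn+1), C(n+d,d)}`
(i.e. `σ_s(Split_d(ℙⁿ))` is nondefective for all `n ≥ n_0`). -/
theorem stmt8 (K : Type*) [Field K] [IsAlgClosed K] [CharZero K]
    (d s n₀ : ℕ) (hd : 1 ≤ d) (hs : 1 ≤ s) (hn₀ : 1 ≤ n₀)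
    (hsub : s * (d * n₀ + 1) ≤ (n₀ + d).choose d)
    (hex : ∃ f : Fin s → Fin d → MvPolynomial (Fin (n₀ + 1)) K,
      (∀ i j, (f i j).IsHomogeneous 1) ∧
      Module.finrank K ↥(⨆ i : Fin s, ⨆ j : Fin d,
          Submodule.map (LinearMap.mulLeft K (∏ m ∈ Finset.univ.erase j, f i m))
            (homogeneousSubmodule (Fin (n₀ + 1)) K 1))
        = s * (d * n₀ + 1)) :
    ∀ n : ℕ, n₀ ≤ n →
      ∃ g : Fin s → Fin d → MvPolynomial (Fin (n + 1)) K,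
        (∀ i j, (g i j).IsHomogeneous 1) ∧
        Module.finrank K ↥(⨆ i : Fin s, ⨆ j : Fin d,
            Submodule.map (LinearMap.mulLeft K (∏ m ∈ Finset.univ.erase j, g i m))
              (homogeneousSubmodule (Fin (n + 1)) K 1))
          = min (s * (d * n + 1)) ((n + d).choose d) :=
  stmt8_general K d s n₀ hn₀ hsub hex
end

section
/- Let K be an algebraically closed field of characteristic zero and let s, n be integers with 2 ≤ s and 2s ≤ n. Then for every choice of linear forms ℓ_1,…,ℓ_{2s} in K[x_0,…,x_n], the subspace Σ_{i=1}^{2s} ℓ_i·R_1 of R_2 has dimension at most s(2n+1) − 2s(s−1), which is strictly less than min{s(2n+1), C(n+2,2)} (i.e., σ_s(Split_2(P^n)) is defective for 2 ≤ s ≤ n/2). -/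
/-!
Let `W` be the span of the `ℓ i` and `d = dim W ≤ 2s`, so that `Σ ℓ_i R_1 = W * R_1`. Adjoining a
new form `x` to `W` enlarges `W * R_1` by at most `dim R_1 - dim W`, because `x • W` lies in both
`W * R_1` and `x • R_1`. By induction `dim (W * R_1) ≤ d (n + 1) - C(d, 2)`, which increases with
`d ≤ n + 1`, so it is at most `2s (n + 1) - C(2s, 2) = s (2n + 1) - 2s (s - 1)`.
-/

open MvPolynomial Submodule Module

theorem Nat.succ_choose_two (d : ℕ) : (d + 1).choose 2 = d + d.choose 2 := by
  simp [Nat.choose_succ_succ']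

theorem Nat.add_choose_two_le_of_le {x d e N : ℕ} (h : x + d.choose 2 ≤ d * N) (hde : d ≤ e)
    (heN : e ≤ N + 1) : x + e.choose 2 ≤ e * N := by
  induction e, hde using Nat.le_induction with
  | base => exact h
  | succ e _ ih =>
    rw [Nat.succ_choose_two, Nat.succ_mul]
    linarith [ih (by omega)]

theorem Nat.two_mul_choose_two (m : ℕ) : 2 * m.choose 2 = m * (m - 1) := by
  rw [Nat.choose_two_right]
  exact Nat.mul_div_cancel' (Nat.even_mul_pred_self m).two_dvd

section ProductOfSubspaces

variable {K A : Type*} [Field K] [CommRing A] [Algebra K A]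

theorem map_mulLeft_eq_span_singleton_mul (x : A) (V : Submodule K A) :
    V.map (LinearMap.mulLeft K x) = (K ∙ x) * V := by
  ext y
  simp [mem_span_singleton_mul]

theorem iSup_map_mulLeft_eq_span_range_mul {ι : Type*} (ℓ : ι → A) (V : Submodule K A) :
    ⨆ i, V.map (LinearMap.mulLeft K (ℓ i)) = span K (Set.range ℓ) * V := by
  simp only [map_mulLeft_eq_span_singleton_mul, span_range_eq_iSup, iSup_mul]

theorem finrank_sup_span_singleton_of_notMem {W : Submodule K A} [FiniteDimensional K W] {x : A}
    (hx : x ∉ W) : finrank K ↥(W ⊔ K ∙ x) = finrank K W + 1 := by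
  have hx0 : x ≠ 0 := fun h => hx (h ▸ W.zero_mem)
  have hdisj : W ⊓ (K ∙ x) = ⊥ := (disjoint_span_singleton_of_notMem hx).eq_bot
  have := finrank_sup_add_finrank_inf_eq W (K ∙ x)
  rw [hdisj, finrank_bot, finrank_span_singleton hx0] at this
  omega

instance {M N : Submodule K A} [FiniteDimensional K M] [FiniteDimensional K N] :
    FiniteDimensional K ↥(M * N) :=
  Module.Finite.iff_fg.mpr ((Module.Finite.iff_fg.mp ‹_›).mul (Module.Finite.iff_fg.mp ‹_›))

theorem finrank_sup_span_singleton_mul_add_le [NoZeroDivisors A] {W V : Submodule K A}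
    [FiniteDimensional K V] (hWV : W ≤ V) {x : A} (hxV : x ∈ V) (hx : x ≠ 0) :
    finrank K ↥((W ⊔ K ∙ x) * V) + finrank K W ≤ finrank K ↥(W * V) + finrank K V := by
  have : FiniteDimensional K W := finiteDimensional_of_le hWV
  have hxW_le : W.map (LinearMap.mulLeft K x) ≤ W * V ⊓ (K ∙ x) * V := by
    refine le_inf ?_ ?_
    · rintro _ ⟨w, hw, rfl⟩
      simpa only [LinearMap.mulLeft_apply, mul_comm x w] using mul_mem_mul hw hxV
    · rw [← map_mulLeft_eq_span_singleton_mul]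
      exact map_mono hWV
  have hxW : finrank K ↥(W.map (LinearMap.mulLeft K x)) = finrank K W :=
    (equivMapOfInjective _ (mul_right_injective₀ hx) W).finrank_eq.symm
  have hxV_le : finrank K ↥((K ∙ x) * V) ≤ finrank K V := by
    rw [← map_mulLeft_eq_span_singleton_mul]
    exact finrank_map_le _ _
  have hsup_inf := finrank_sup_add_finrank_inf_eq (W * V) ((K ∙ x) * V)
  have hxW_le_inf := finrank_mono hxW_le
  rw [Submodule.sup_mul]
  omega

theorem finrank_span_mul_add_choose_two_le [NoZeroDivisors A] {V : Submodule K A}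
    [FiniteDimensional K V] (s : Finset A) (hsV : ↑s ⊆ (V : Set A)) :
    finrank K ↥(span K (s : Set A) * V) + (finrank K ↥(span K (s : Set A))).choose 2
      ≤ finrank K ↥(span K (s : Set A)) * finrank K V := by
  classical
  induction s using Finset.induction with
  | empty => rw [Finset.coe_empty, span_empty, Submodule.bot_mul, finrank_bot]; simp
  | @insert x s _ ih =>
    rw [Finset.coe_insert, Set.insert_subset_iff] at hsV
    obtain ⟨hxV, hsV⟩ := hsV
    rw [Finset.coe_insert]
    by_cases hx : x ∈ span K (s : Set A)
    · rw [span_insert_eq_span hx]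
      exact ih hsV
    · have : FiniteDimensional K ↥(span K (s : Set A)) :=
        finiteDimensional_of_le (span_le.mpr hsV)
      have hx0 : x ≠ 0 := fun h => hx (h ▸ zero_mem _)
      rw [span_insert, sup_comm, finrank_sup_span_singleton_of_notMem hx,
        Nat.succ_choose_two]
      have hstep := finrank_sup_span_singleton_mul_add_le (span_le.mpr hsV) hxV hx0
      linarith [ih hsV]

theorem finrank_mul_add_choose_two_le [NoZeroDivisors A] {W V : Submodule K A}
    [FiniteDimensional K V] (hWV : W ≤ V) :
    finrank K ↥(W * V) + (finrank K W).choose 2 ≤ finrank K W * finrank K V := by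
  have : FiniteDimensional K W := finiteDimensional_of_le hWV
  obtain ⟨s, rfl⟩ := Module.Finite.iff_fg.mp this
  exact finrank_span_mul_add_choose_two_le s (subset_span.trans hWV)

end ProductOfSubspaces

instance (K σ : Type*) [Field K] [Finite σ] :
    FiniteDimensional K ↥(homogeneousSubmodule σ K 1) := by
  rw [homogeneousSubmodule_one_eq_span_X]
  exact FiniteDimensional.span_of_finite K (Set.finite_range _)

theorem finrank_homogeneousSubmodule_one_le (K : Type*) [Field K] (σ : Type*) [Fintype σ] :
    finrank K ↥(homogeneousSubmodule σ K 1) ≤ Fintype.card σ := by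
  rw [homogeneousSubmodule_one_eq_span_X]
  exact finrank_range_le_card _

theorem stmt14_general (K : Type*) [Field K]
    (s n : ℕ) (hs : 2 ≤ s) (hn : 2 * s ≤ n) :
    (∀ ℓ : Fin (2 * s) → MvPolynomial (Fin (n + 1)) K,
      (∀ i, (ℓ i).IsHomogeneous 1) →
      Module.finrank K ↥(⨆ i : Fin (2 * s),
          Submodule.map (LinearMap.mulLeft K (ℓ i))
            (homogeneousSubmodule (Fin (n + 1)) K 1))
        ≤ s * (2 * n + 1) - 2 * s * (s - 1)) ∧
    s * (2 * n + 1) - 2 * s * (s - 1) < min (s * (2 * n + 1)) ((n + 2).choose 2) := by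
  have hc := Nat.two_mul_choose_two (2 * s)
  have hC := Nat.two_mul_choose_two (n + 2)
  have hle : 2 * s * (s - 1) ≤ s * (2 * n + 1) := by
    rw [mul_comm 2 s, mul_assoc]
    exact Nat.mul_le_mul_left s (by omega)
  have hbound : s * (2 * n + 1) - 2 * s * (s - 1) + (2 * s).choose 2 = 2 * s * (n + 1) := by
    zify [hle, (by omega : 1 ≤ s), (by omega : 1 ≤ 2 * s)] at hc ⊢
    linarith
  refine ⟨fun ℓ hℓ => ?_, ?_⟩
  · set V := homogeneousSubmodule (Fin (n + 1)) K 1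
    have hV : finrank K V ≤ n + 1 := by
      simpa using finrank_homogeneousSubmodule_one_le K (Fin (n + 1))
    have hWV : span K (Set.range ℓ) ≤ V := span_le.mpr (Set.range_subset_iff.mpr hℓ)
    have hW : finrank K ↥(span K (Set.range ℓ)) ≤ 2 * s := by
      simpa [Set.finrank] using finrank_range_le_card (R := K) ℓ
    rw [iSup_map_mulLeft_eq_span_range_mul]
    have hdim := Nat.add_choose_two_le_of_le
      ((finrank_mul_add_choose_two_le hWV).trans (Nat.mul_le_mul_left _ hV)) hW (by omega)
    omega
  · -- `(n + 2) (n + 1) - 2 (s (2n + 1) - 2s (s - 1)) = (n + 1 - 2s) (n + 2 - 2s) > 0`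
    rw [lt_min_iff]
    zify [hle, (by omega : 1 ≤ s), (by omega : 1 ≤ 2 * s), (by omega : 1 ≤ n + 2)] at hc hC hs hn ⊢
    constructor <;> nlinarith

/-- For `2 ≤ s` and `2s ≤ n`, for every choice of linear forms `ℓ_1,…,ℓ_{2s}`
in `K[x_0,…,x_n]`, the subspace `Σ_{i=1}^{2s} ℓ_i·R_1` of `R_2` has dimension at most
`s(2n+1) − 2s(s−1)`, which is strictly less than `min{s(2n+1), C(n+2,2)}`
(i.e. `σ_s(Split_2(ℙⁿ))` is defective for `2 ≤ s ≤ n/2`). -/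
theorem stmt14 (K : Type*) [Field K] [IsAlgClosed K] [CharZero K]
    (s n : ℕ) (hs : 2 ≤ s) (hn : 2 * s ≤ n) :
    (∀ ℓ : Fin (2 * s) → MvPolynomial (Fin (n + 1)) K,
      (∀ i, (ℓ i).IsHomogeneous 1) →
      Module.finrank K ↥(⨆ i : Fin (2 * s),
          Submodule.map (LinearMap.mulLeft K (ℓ i))
            (homogeneousSubmodule (Fin (n + 1)) K 1))
        ≤ s * (2 * n + 1) - 2 * s * (s - 1)) ∧
    s * (2 * n + 1) - 2 * s * (s - 1) < min (s * (2 * n + 1)) ((n + 2).choose 2) :=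
  stmt14_general K s n hs hn
end
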